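/- Let f : X → X be a transitive subshift of finite type, and let Φ : X → ℝ^m be constant on cylinders of length k. Then Rot(Φ) is a polyhedron; more precisely, Rot(Φ) equals the convex hull of the finite set { rv(μ_x) : x a k-elementary periodic point of f }. -/

import Mathlib

open MeasureTheory

instance (d : ℕ) : TopologicalSpace (Fin d) := ⊥

instance (d : ℕ) : DiscreteTopology (Fin d) := ⟨rfl⟩

/-- The subshift of finite type determined by the 0-1 transition matrix `M`. -/
def SFT (d : ℕ) (M : Fin d → Fin d → Bool) : Type :=
  {x : ℕ → Fin d // ∀ n, M (x n) (x (n + 1)) = true}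

instance (d : ℕ) (M : Fin d → Fin d → Bool) : TopologicalSpace (SFT d M) :=
  inferInstanceAs (TopologicalSpace {x : ℕ → Fin d // ∀ n, M (x n) (x (n + 1)) = true})

instance (d : ℕ) (M : Fin d → Fin d → Bool) : MeasurableSpace (SFT d M) := borel _

instance (d : ℕ) (M : Fin d → Fin d → Bool) : BorelSpace (SFT d M) := ⟨rfl⟩

/-- The shift map on a subshift of finite type. -/
def SFT.shift {d : ℕ} {M : Fin d → Fin d → Bool} (x : SFT d M) : SFT d M :=
  ⟨fun n => x.1 (n + 1), fun n => x.2 (n + 1)⟩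

/-- `μ` is a shift-invariant Borel probability measure. -/
def InvariantProb {d : ℕ} {M : Fin d → Fin d → Bool} (μ : ProbabilityMeasure (SFT d M)) :
    Prop :=
  (μ : Measure (SFT d M)).map SFT.shift = (μ : Measure (SFT d M))

/-- The generalized rotation set of a potential `Φ` with respect to the shift. -/
def Rot {d : ℕ} {M : Fin d → Fin d → Bool} {m : ℕ}
    (Φ : SFT d M → EuclideanSpace ℝ (Fin m)) : Set (EuclideanSpace ℝ (Fin m)) :=
  {w | ∃ μ : ProbabilityMeasure (SFT d M), InvariantProb μ ∧
        (∫ x, Φ x ∂(μ : Measure (SFT d M))) = w}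

/-- `x` is a `k`-elementary periodic point of (smallest) period `n`: the cylinders of length
`k` generated by `x, f(x), …, f^{n−1}(x)` are pairwise disjoint. -/
def KElem {d : ℕ} {M : Fin d → Fin d → Bool} (k : ℕ) (x : SFT d M) (n : ℕ) : Prop :=
  0 < n ∧ Function.IsPeriodicPt SFT.shift n x ∧
  (∀ p, 0 < p → Function.IsPeriodicPt SFT.shift p x → n ≤ p) ∧
  (∀ i j, i < n → j < n → i ≠ j →
    ∃ l < k, (SFT.shift^[i] x).1 l ≠ (SFT.shift^[j] x).1 l)

/-!
The masses `μ(C_u)` of the cylinders of the words `u` of length `k + 1` form a circulation on the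
graph whose vertices are the words of length `k` and in which `u` is an edge from its first `k`
letters to its last `k` letters: by shift invariance both endpoint marginals are the distribution
of the first `k` letters. A nonnegative circulation is a nonnegative combination of simple cycles,
and a simple cycle in the support of `μ` is the orbit of a `k`-elementary periodic point. As `Φ`
only reads the first `k` letters, `∫ Φ dμ` is then a convex combination of the rotation vectors
of these points. Conversely, periodic point measures are invariant and `Rot Φ` is convex.
Finiteness holds because a `k`-elementary periodic point has period at most `d ^ k`, and a
periodic point is determined by its first period.
-/

open Finset
open scoped ENNReal

lemma Finset.sum_range_rotate {β : Type*} [AddCommMonoid β] (f : ℕ → β) {n : ℕ}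
    (h : f n = f 0) : ∑ i ∈ range n, f (i + 1) = ∑ i ∈ range n, f i := by
  cases n with
  | zero => simp
  | succ n => rw [sum_range_succ (fun i => f (i + 1)), h, sum_range_succ' f]

section Circulation

variable {E V : Type*} (src tgt : E → V)

/-- A simple cycle, encoded as a `length`-periodic sequence of consecutive edges whose sources
are distinct within one period. -/
structure SimpleCycle where
  length : ℕ
  length_pos : 0 < length
  edge : ℕ → E
  edge_add_length : ∀ i, edge (i + length) = edge i
  tgt_edge : ∀ i, tgt (edge i) = src (edge (i + 1))
  src_injOn : Set.InjOn (fun i => src (edge i)) (Set.Iio length)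

def IsCirculation [Fintype E] [DecidableEq V] (q : E → ℝ) : Prop :=
  ∀ v, ∑ f with src f = v, q f = ∑ f with tgt f = v, q f

variable {src tgt}

lemma IsCirculation.sub [Fintype E] [DecidableEq V] {q r : E → ℝ} (hq : IsCirculation src tgt q)
    (hr : IsCirculation src tgt r) : IsCirculation src tgt (q - r) := fun v => by
  simp only [Pi.sub_apply, sum_sub_distrib, hq v, hr v]

lemma IsCirculation.smul [Fintype E] [DecidableEq V] {q : E → ℝ} (hq : IsCirculation src tgt q)
    (a : ℝ) : IsCirculation src tgt (a • q) := fun v => by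
  simp only [Pi.smul_apply, smul_eq_mul, ← mul_sum, hq v]

namespace SimpleCycle

variable (c : SimpleCycle src tgt) {F : Type*} [AddCommGroup F] [Module ℝ F]

lemma edge_injOn : Set.InjOn c.edge (Set.Iio c.length) := fun _ hi _ hj h =>
  c.src_injOn hi hj (congrArg src h)

variable [DecidableEq E]

def count (f : E) : ℝ := ∑ i ∈ range c.length, if c.edge i = f then 1 else 0

lemma count_eq_ite (f : E) : c.count f = if ∃ i < c.length, c.edge i = f then 1 else 0 := by
  split_ifs with h
  · obtain ⟨i, hi, rfl⟩ := h
    rw [count, sum_eq_single_of_mem i (mem_range.2 hi) fun j hj hji =>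
      if_neg fun he => hji (c.edge_injOn (mem_range.1 hj) hi he), if_pos rfl]
  · exact sum_eq_zero fun i hi => if_neg fun he => h ⟨i, mem_range.1 hi, he⟩

lemma count_nonneg (f : E) : 0 ≤ c.count f :=
  sum_nonneg fun _ _ => by split_ifs <;> norm_num

variable [Fintype E]

lemma sum_count_smul (g : E → F) :
    ∑ f, c.count f • g f = ∑ i ∈ range c.length, g (c.edge i) := by
  simp only [count, sum_smul, ite_smul, one_smul, zero_smul]
  rw [sum_comm]
  exact sum_congr rfl fun i _ => by simp

lemma sum_count : ∑ f, c.count f = c.length := by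
  simpa using c.sum_count_smul (fun _ => (1 : ℝ))

lemma isCirculation_count [DecidableEq V] : IsCirculation src tgt c.count := by
  intro v
  have key : ∀ p : E → V, ∑ f with p f = v, c.count f
      = ∑ i ∈ range c.length, if p (c.edge i) = v then (1 : ℝ) else 0 := fun p => by
    rw [sum_filter, ← c.sum_count_smul fun f => if p f = v then (1 : ℝ) else 0]
    exact sum_congr rfl fun f _ => by split_ifs <;> simp
  rw [key, key]
  simp only [c.tgt_edge]
  refine (sum_range_rotate (fun i => if src (c.edge i) = v then (1 : ℝ) else 0) ?_).symm
  rw [← zero_add c.length, c.edge_add_length]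

noncomputable def average (g : E → F) : F :=
  (c.length : ℝ)⁻¹ • ∑ i ∈ range c.length, g (c.edge i)

lemma sum_count_smul_eq_smul_average (g : E → F) :
    ∑ f, c.count f • g f = (c.length : ℝ) • c.average g := by
  rw [average, smul_inv_smul₀ (Nat.cast_ne_zero.2 c.length_pos.ne'), c.sum_count_smul]

end SimpleCycle

lemma exists_path_of_isCirculation [Fintype E] [DecidableEq V] {q : E → ℝ} (hq0 : 0 ≤ q)
    (hq : IsCirculation src tgt q) {f₀ : E} (hf₀ : 0 < q f₀) :
    ∃ p : ℕ → E, (∀ i, 0 < q (p i)) ∧ ∀ i, tgt (p i) = src (p (i + 1)) := by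
  have hstep : ∀ f : {f // 0 < q f}, ∃ f' : {f // 0 < q f}, src f'.1 = tgt f.1 := by
    rintro ⟨f, hf⟩
    -- conservation at `tgt f`: the positive inflow through `f` must leave again
    have hpos : 0 < ∑ f' with src f' = tgt f, q f' := by
      rw [hq]
      exact hf.trans_le (single_le_sum (fun f' _ => hq0 f') (by simp))
    obtain ⟨f', hf', hpos'⟩ := exists_lt_of_sum_lt (f := fun _ => (0 : ℝ)) (by simpa using hpos)
    exact ⟨⟨f', hpos'⟩, (mem_filter.1 hf').2⟩
  choose next hnext using hstep
  refine ⟨fun i => (next^[i] ⟨f₀, hf₀⟩).1, fun i => (next^[i] _).2, fun i => ?_⟩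
  simp only [Function.iterate_succ_apply', hnext]

lemma exists_simpleCycle_of_path [Finite V] (p : ℕ → E) (hp : ∀ i, tgt (p i) = src (p (i + 1))) :
    ∃ c : SimpleCycle src tgt, ∀ i, ∃ j, c.edge i = p j := by
  classical
  have hex : ∃ m, 0 < m ∧ ∃ s, src (p (s + m)) = src (p s) := by
    obtain ⟨a, b, hab, h⟩ := Finite.exists_ne_map_eq_of_infinite (fun i => src (p i))
    rcases Nat.lt_or_gt_of_ne hab with hab | hab
    · exact ⟨b - a, by omega, a, by rw [Nat.add_sub_cancel' hab.le]; exact h.symm⟩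
    · exact ⟨a - b, by omega, b, by rw [Nat.add_sub_cancel' hab.le]; exact h⟩
  obtain ⟨hm, s, hs⟩ := Nat.find_spec hex
  set m := Nat.find hex
  -- minimality of `m` makes the sources along one period distinct
  have hmin : ∀ i j, i < j → j < m → src (p (s + i)) ≠ src (p (s + j)) := fun i j hij hj h =>
    Nat.find_min hex (show j - i < m by omega)
      ⟨by omega, s + i, by rw [show s + i + (j - i) = s + j by omega]; exact h.symm⟩
  refine ⟨⟨m, hm, fun i => p (s + i % m), fun i => by simp only [Nat.add_mod_right],
    fun i => ?_, fun i hi j hj h => ?_⟩, fun i => ⟨_, rfl⟩⟩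
  · have hr := Nat.mod_lt i hm
    simp only [hp, ← Nat.mod_add_mod i m 1]
    rcases Nat.lt_or_ge (i % m + 1) m with h | h
    · rw [Nat.mod_eq_of_lt h, add_assoc]
    · have h : i % m + 1 = m := by omega
      rw [h, Nat.mod_self, add_zero, ← hs, add_assoc, h]
  · simp only [Nat.mod_eq_of_lt hi, Nat.mod_eq_of_lt hj] at h
    rcases lt_trichotomy i j with hij | rfl | hij
    · exact absurd h (hmin i j hij hj)
    · rfl
    · exact absurd h.symm (hmin j i hij hi)

lemma exists_simpleCycle_of_isCirculation [Fintype E] [DecidableEq V] [Finite V] {q : E → ℝ}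
    (hq0 : 0 ≤ q) (hq : IsCirculation src tgt q) {f₀ : E} (hf₀ : 0 < q f₀) :
    ∃ c : SimpleCycle src tgt, ∀ i, 0 < q (c.edge i) := by
  obtain ⟨p, hpos, hp⟩ := exists_path_of_isCirculation hq0 hq hf₀
  obtain ⟨c, hc⟩ := exists_simpleCycle_of_path p hp
  exact ⟨c, fun i => by obtain ⟨j, hj⟩ := hc i; exact hj ▸ hpos j⟩

variable [Fintype E] [DecidableEq E] [DecidableEq V] [Finite V]

lemma exists_smul_count_le_of_isCirculation {q : E → ℝ} (hq0 : 0 ≤ q)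
    (hq : IsCirculation src tgt q) (hne : q ≠ 0) :
    ∃ (c : SimpleCycle src tgt) (δ : ℝ), (∀ i, 0 < q (c.edge i)) ∧ 0 ≤ δ ∧
      δ • c.count ≤ q ∧ ∃ f, q f ≠ 0 ∧ q f = δ * c.count f := by
  obtain ⟨f₀, hf₀⟩ := Function.ne_iff.1 hne
  obtain ⟨c, hc⟩ := exists_simpleCycle_of_isCirculation hq0 hq ((hq0 f₀).lt_of_ne' hf₀)
  -- subtract the smallest weight along `c`: this keeps `q` nonnegative and kills one edge
  have hne : (range c.length).Nonempty := nonempty_range_iff.2 c.length_pos.ne'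
  obtain ⟨i₀, hi₀, hδ⟩ := exists_mem_eq_inf' hne (fun i => q (c.edge i))
  refine ⟨c, q (c.edge i₀), hc, (hc i₀).le, fun f => ?_, c.edge i₀, (hc i₀).ne', ?_⟩
  · simp only [Pi.smul_apply, smul_eq_mul, c.count_eq_ite]
    split_ifs with h
    · obtain ⟨i, hi, rfl⟩ := h
      rw [mul_one, ← hδ]
      exact inf'_le _ (mem_range.2 hi)
    · simpa using hq0 f
  · rw [c.count_eq_ite, if_pos ⟨i₀, mem_range.1 hi₀, rfl⟩, mul_one]

theorem exists_eq_sum_smul_count_of_isCirculation {q : E → ℝ} (hq0 : 0 ≤ q)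
    (hq : IsCirculation src tgt q) :
    ∃ (n : ℕ) (w : Fin n → ℝ) (c : Fin n → SimpleCycle src tgt),
      (∀ j, 0 ≤ w j) ∧ (∀ j i, 0 < q ((c j).edge i)) ∧ q = ∑ j, w j • (c j).count := by
  induction h : #{f | q f ≠ 0} using Nat.strong_induction_on generalizing q with
  | _ N ih =>
  by_cases hne : q = 0
  · exact ⟨0, Fin.elim0, Fin.elim0, fun j => j.elim0, fun j => j.elim0, by simp [hne]⟩
  obtain ⟨c, δ, hc, hδ, hle, f, hf, hfδ⟩ := exists_smul_count_le_of_isCirculation hq0 hq hne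
  have hle' : q - δ • c.count ≤ q := fun g => sub_le_self _ (smul_nonneg hδ (c.count_nonneg g))
  have hsupp : ({f | (q - δ • c.count) f ≠ 0} : Finset E) ⊂ ({f | q f ≠ 0} : Finset E) := by
    refine (ssubset_iff_of_subset fun g hg => ?_).2 ⟨f, by simp [hf], by simp [hfδ]⟩
    simp only [mem_filter, mem_univ, true_and] at hg ⊢
    intro hg0
    exact hg (le_antisymm (hg0 ▸ hle' g) (sub_nonneg.2 (hle g)))
  obtain ⟨n, w, cs, hw, hcs, hsum⟩ := ih _ (h ▸ card_lt_card hsupp) (sub_nonneg.2 hle)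
    (hq.sub (c.isCirculation_count.smul δ)) rfl
  refine ⟨n + 1, Fin.cons δ w, Fin.cons c cs, Fin.cases hδ hw, Fin.cases hc ?_, ?_⟩
  · rw [Fin.sum_univ_succ, Fin.cons_zero, Fin.cons_zero]
    simp only [Fin.cons_succ, ← hsum, add_sub_cancel]
  · simpa only [Fin.cons_succ] using fun j i => (hcs j i).trans_le (hle' _)

theorem sum_smul_mem_convexHull_average {F : Type*} [AddCommGroup F] [Module ℝ F] {q : E → ℝ}
    (hq0 : 0 ≤ q) (hq : IsCirculation src tgt q) (hq1 : ∑ f, q f = 1) (g : E → F) :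
    ∑ f, q f • g f ∈
      convexHull ℝ {y | ∃ c : SimpleCycle src tgt, (∀ i, 0 < q (c.edge i)) ∧ c.average g = y} := by
  obtain ⟨n, w, c, hw, hc, rfl⟩ := exists_eq_sum_smul_count_of_isCirculation hq0 hq
  have hsum : ∑ f, (∑ j, w j • (c j).count) f • g f
      = ∑ j, (w j * (c j).length) • (c j).average g := by
    simp only [Finset.sum_apply, Pi.smul_apply, smul_eq_mul, sum_smul, mul_smul]
    rw [sum_comm]
    simp only [← smul_sum, SimpleCycle.sum_count_smul_eq_smul_average]
  have hweight : ∑ j, w j * (c j).length = 1 := by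
    simpa only [SimpleCycle.sum_count, Finset.sum_apply, Pi.smul_apply, smul_eq_mul, ← mul_sum,
      sum_comm (s := univ) (t := univ)] using hq1
  rw [hsum]
  exact (convex_convexHull ℝ _).sum_mem (fun j _ => mul_nonneg (hw j) (Nat.cast_nonneg _))
    hweight fun j _ => subset_convexHull ℝ _ ⟨c j, hc j, rfl⟩

end Circulation

lemma isCirculation_measureReal_singleton {E V : Type*} [Fintype E] [DecidableEq V]
    [MeasurableSpace E] [MeasurableSingletonClass E] [MeasurableSpace V]
    [MeasurableSingletonClass V] {src tgt : E → V} (ν : Measure E) [IsFiniteMeasure ν]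
    (h : ν.map src = ν.map tgt) : IsCirculation src tgt fun u => ν.real {u} := by
  have key : ∀ p : E → V, ∀ v, ∑ u with p u = v, ν.real {u} = (ν.map p).real {v} := by
    intro p v
    rw [sum_measureReal_singleton, map_measureReal_apply (measurable_of_finite p)
      (measurableSet_singleton v)]
    congr 1
    ext
    simp
  exact fun v => by rw [key, key, h]

namespace SFT

variable {d : ℕ} {M : Fin d → Fin d → Bool}

lemma continuous_coord (i : ℕ) : Continuous fun x : SFT d M => x.1 i :=
  (continuous_apply i).comp continuous_subtype_val

lemma continuous_shift : Continuous (shift : SFT d M → SFT d M) :=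
  Continuous.subtype_mk (continuous_pi fun n => continuous_coord (n + 1)) _

lemma measurable_shift : Measurable (shift : SFT d M → SFT d M) :=
  continuous_shift.measurable

lemma iterate_shift_apply (i : ℕ) (x : SFT d M) (p : ℕ) : (shift^[i] x).1 p = x.1 (p + i) := by
  induction i generalizing x with
  | zero => rfl
  | succ i ih => rw [Function.iterate_succ_apply, ih]; exact congrArg x.1 (add_assoc p i 1)

lemma ext_of_isPeriodicPt {n : ℕ} (hn : 0 < n) {x y : SFT d M}
    (hx : Function.IsPeriodicPt shift n x) (hy : Function.IsPeriodicPt shift n y)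
    (h : ∀ i < n, x.1 i = y.1 i) : x = y := by
  refine Subtype.ext (funext fun p => ?_)
  have hmod : ∀ z : SFT d M, Function.IsPeriodicPt shift n z → z.1 p = z.1 (p % n) :=
    fun z hz => by
      simpa only [iterate_shift_apply, zero_add] using
        congrArg (·.1 0) (hz.iterate_mod_apply p).symm
  rw [hmod x hx, hmod y hy, h _ (Nat.mod_lt p hn)]

def window (k : ℕ) (x : SFT d M) : Fin k → Fin d := fun i => x.1 i

lemma measurable_window (k : ℕ) : Measurable (window k : SFT d M → Fin k → Fin d) :=
  measurable_pi_lambda _ fun i => (continuous_coord i).measurable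

lemma exists_eq_comp_window {F : Type*} [Zero F] {k : ℕ} {Φ : SFT d M → F}
    (hΦ : ∀ x y : SFT d M, (∀ i < k, x.1 i = y.1 i) → Φ x = Φ y) :
    ∃ G : (Fin k → Fin d) → F, Φ = fun x => G (window k x) := by
  have hfac : Function.FactorsThrough Φ (window k) := fun x y h =>
    hΦ x y fun i hi => congrFun h ⟨i, hi⟩
  exact ⟨Function.extend (window k) Φ 0, funext fun x => (hfac.extend_apply 0 x).symm⟩

section Potential

variable {F : Type*} [NormedAddCommGroup F] {k : ℕ} (G : (Fin k → Fin d) → F)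

lemma integrable_comp_window (μ : Measure (SFT d M)) [IsFiniteMeasure μ] :
    Integrable (fun x => G (window k x)) μ :=
  (integrable_map_measure StronglyMeasurable.of_discrete.aestronglyMeasurable
    (measurable_window k).aemeasurable).1 Integrable.of_finite

lemma integral_comp_window [NormedSpace ℝ F] [CompleteSpace F] (μ : Measure (SFT d M))
    [IsFiniteMeasure μ] :
    ∫ x, G (window k x) ∂μ = ∑ u, (μ.map (window k)).real {u} • G u := by
  rw [← integral_map (measurable_window k).aemeasurable
    StronglyMeasurable.of_discrete.aestronglyMeasurable, integral_fintype Integrable.of_finite]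

end Potential

section DeBruijn

variable {k : ℕ} (c : SimpleCycle (Fin.init : (Fin (k + 1) → Fin d) → Fin k → Fin d) Fin.tail)

lemma edge_add_apply_zero (p : ℕ) {l : ℕ} (hl : l ≤ k) :
    c.edge (p + l) 0 = c.edge p ⟨l, Nat.lt_succ_of_le hl⟩ := by
  induction l generalizing p with
  | zero => rfl
  | succ l ih =>
    rw [← add_assoc, add_right_comm, ih (p + 1) (by omega)]
    exact (congrFun (c.tgt_edge p) ⟨l, hl⟩).symm

lemma exists_window_iterate_eq (hk : 0 < k)
    (hc : ∀ i, ∃ x : SFT d M, window (k + 1) x = c.edge i) :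
    ∃ x : SFT d M, ∀ i, window (k + 1) (shift^[i] x) = c.edge i := by
  -- as `0 < k`, the transition from letter `p` to letter `p + 1` is inside the word `c.edge p`
  have hadm : ∀ p, M (c.edge p 0) (c.edge (p + 1) 0) = true := fun p => by
    obtain ⟨z, hz⟩ := hc p
    rw [edge_add_apply_zero c p hk, ← hz]
    exact z.2 0
  refine ⟨(⟨fun p => c.edge p 0, hadm⟩ : SFT d M), fun i => funext fun l => ?_⟩
  refine (iterate_shift_apply i _ l).trans ?_
  refine (congrArg (c.edge · 0) (add_comm (l : ℕ) i)).trans ?_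
  exact edge_add_apply_zero c i (Nat.lt_succ_iff.1 l.2)

lemma kElem_of_window_iterate_eq {x : SFT d M}
    (hx : ∀ i, window (k + 1) (shift^[i] x) = c.edge i) : KElem k x c.length := by
  have hwin : ∀ i, window k (shift^[i] x) = Fin.init (c.edge i) := fun i => by rw [← hx]; rfl
  have hcoord : ∀ p, x.1 p = c.edge p 0 := fun p => by
    simpa [window, iterate_shift_apply] using congrFun (hx p) 0
  have hper : Function.IsPeriodicPt shift c.length x :=
    Subtype.ext (funext fun p => by rw [iterate_shift_apply, hcoord, hcoord, c.edge_add_length])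
  refine ⟨c.length_pos, hper, fun p hp hpx => ?_, fun i j hi hj hij => ?_⟩
  · by_contra! hlt
    refine hp.ne' (c.src_injOn hlt c.length_pos ?_)
    simp only [← hwin, hpx.eq, Function.iterate_zero, id]
  · obtain ⟨l, hl⟩ := Function.ne_iff.1 fun h => hij (c.src_injOn hi hj h)
    simp only [← hwin] at hl
    exact ⟨l, l.2, hl⟩

end DeBruijn

noncomputable def orbitMeasure (x : SFT d M) (n : ℕ) : Measure (SFT d M) :=
  (n : ℝ≥0∞)⁻¹ • ∑ i ∈ range n, Measure.dirac (shift^[i] x)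

lemma isProbabilityMeasure_orbitMeasure (x : SFT d M) {n : ℕ} (hn : 0 < n) :
    IsProbabilityMeasure (orbitMeasure x n) := by
  constructor
  simp [orbitMeasure, ENNReal.inv_mul_cancel (Nat.cast_ne_zero.2 hn.ne')]

lemma map_shift_orbitMeasure {x : SFT d M} {n : ℕ} (hx : Function.IsPeriodicPt shift n x) :
    (orbitMeasure x n).map shift = orbitMeasure x n := by
  rw [orbitMeasure, Measure.map_smul, Measure.map_finset_sum measurable_shift.aemeasurable]
  simp only [Measure.map_dirac' measurable_shift, ← Function.iterate_succ_apply' shift]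
  rw [sum_range_rotate (fun i => Measure.dirac (shift^[i] x)) (by rw [hx.eq]; rfl)]

lemma integral_orbitMeasure {F : Type*} [NormedAddCommGroup F] [NormedSpace ℝ F] [CompleteSpace F]
    {f : SFT d M → F} (hf : StronglyMeasurable f) (x : SFT d M) (n : ℕ) :
    ∫ y, f y ∂orbitMeasure x n = (n : ℝ)⁻¹ • ∑ i ∈ range n, f (shift^[i] x) := by
  rw [orbitMeasure, integral_smul_measure, integral_finsetSum_measure fun i _ =>
    integrable_dirac' hf enorm_lt_top]
  simp [integral_dirac' f _ hf]

lemma map_init_eq_map_tail {k : ℕ} {μ : Measure (SFT d M)} (hμ : μ.map shift = μ) :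
    (μ.map (window (k + 1))).map Fin.init = (μ.map (window (k + 1))).map Fin.tail := by
  rw [Measure.map_map (measurable_of_finite _) (measurable_window _),
    Measure.map_map (measurable_of_finite _) (measurable_window _)]
  conv_lhs => rw [← hμ]
  rw [Measure.map_map (measurable_of_finite _ |>.comp (measurable_window _)) measurable_shift]
  rfl

section Rotation

variable {m k : ℕ} (G : (Fin k → Fin d) → EuclideanSpace ℝ (Fin m))

lemma convex_Rot_comp_window : Convex ℝ (Rot fun x : SFT d M => G (window k x)) := by
  rintro _ ⟨μ₁, h₁, rfl⟩ _ ⟨μ₂, h₂, rfl⟩ a b ha hb hab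
  let ν : Measure (SFT d M) := a.toNNReal • (μ₁ : Measure (SFT d M)) + b.toNNReal • (μ₂ : Measure _)
  have hν : IsProbabilityMeasure ν :=
    ⟨by simp [ν, ← ENNReal.coe_add, ← Real.toNNReal_add ha hb, hab]⟩
  refine ⟨⟨ν, hν⟩, ?_, ?_⟩
  · change ν.map shift = ν
    rw [Measure.map_add _ _ measurable_shift, Measure.map_smul, Measure.map_smul, h₁, h₂]
  · change ∫ x, G (window k x) ∂ν = _
    rw [integral_add_measure (integrable_comp_window G _) (integrable_comp_window G _),
      integral_smul_nnreal_measure, integral_smul_nnreal_measure, NNReal.smul_def,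
      NNReal.smul_def, Real.coe_toNNReal _ ha, Real.coe_toNNReal _ hb]

lemma average_mem_Rot {x : SFT d M} {n : ℕ} (hn : 0 < n) (hx : Function.IsPeriodicPt shift n x) :
    (n : ℝ)⁻¹ • ∑ i ∈ range n, G (window k (shift^[i] x)) ∈ Rot fun x : SFT d M => G (window k x) :=
  ⟨⟨orbitMeasure x n, isProbabilityMeasure_orbitMeasure x hn⟩, map_shift_orbitMeasure hx,
    integral_orbitMeasure (StronglyMeasurable.of_discrete.comp_measurable (measurable_window k))
      x n⟩

theorem Rot_subset_convexHull (hk : 0 < k) :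
    Rot (fun x : SFT d M => G (window k x)) ⊆ convexHull ℝ {w | ∃ (x : SFT d M) (n : ℕ),
      KElem k x n ∧ w = (n : ℝ)⁻¹ • ∑ i ∈ range n, G (window k (shift^[i] x))} := by
  rintro _ ⟨μ, hμ, rfl⟩
  set ν := (μ : Measure (SFT d M)).map (window (k + 1))
  have hint : ∫ x, G (window k x) ∂(μ : Measure (SFT d M)) = ∑ u, ν.real {u} • G (Fin.init u) :=
    integral_comp_window (G ∘ Fin.init) _
  have hν1 : ∑ u, ν.real {u} = 1 := by
    have := Measure.isProbabilityMeasure_map (μ := (μ : Measure (SFT d M)))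
      (measurable_window (k + 1)).aemeasurable
    rw [sum_measureReal_singleton, coe_univ, probReal_univ]
  rw [hint]
  refine convexHull_mono ?_ (sum_smul_mem_convexHull_average (fun u => measureReal_nonneg)
    (isCirculation_measureReal_singleton ν (map_init_eq_map_tail hμ)) hν1 (G ∘ Fin.init))
  rintro _ ⟨c, hc, rfl⟩
  have hcyl : ∀ i, ∃ x : SFT d M, window (k + 1) x = c.edge i := fun i => by
    have hpos : 0 < ν.real {c.edge i} := hc i
    rw [map_measureReal_apply (measurable_window _) (measurableSet_singleton _)] at hpos
    obtain ⟨x, hx⟩ := nonempty_of_measure_ne_zero ((measureReal_ne_zero_iff).1 hpos.ne')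
    exact ⟨x, hx⟩
  obtain ⟨x, hx⟩ := exists_window_iterate_eq c hk hcyl
  refine ⟨x, c.length, kElem_of_window_iterate_eq c hx, ?_⟩
  simp only [SimpleCycle.average, Function.comp, ← hx]
  rfl

end Rotation

theorem _root_.KElem.le_pow {k : ℕ} {x : SFT d M} {n : ℕ} (hx : KElem k x n) : n ≤ d ^ k := by
  have hinj : Function.Injective fun i : Fin n => window k (shift^[i] x) := fun i j h => by
    by_contra hne
    obtain ⟨l, hl, hneq⟩ := hx.2.2.2 i j i.2 j.2 (Fin.val_injective.ne hne)
    exact hneq (congrFun h ⟨l, hl⟩)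
  simpa using Fintype.card_le_of_injective _ hinj

lemma finite_setOf_isPeriodicPt {n : ℕ} (hn : 0 < n) :
    {x : SFT d M | Function.IsPeriodicPt shift n x}.Finite :=
  Set.Finite.of_finite_image (f := window n) (Set.toFinite _) fun _ hx _ hy h =>
    ext_of_isPeriodicPt hn hx hy fun i hi => congrFun h ⟨i, hi⟩

lemma finite_kElem_averages {F : Type*} [AddCommMonoid F] [Module ℝ F] (k : ℕ)
    (Φ : SFT d M → F) :
    {w | ∃ (x : SFT d M) (n : ℕ), KElem k x n ∧
      w = (n : ℝ)⁻¹ • ∑ i ∈ range n, Φ (shift^[i] x)}.Finite := by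
  have hfin : {p : SFT d M × ℕ | KElem k p.1 p.2}.Finite := by
    refine ((Set.finite_Icc 1 (d ^ k)).biUnion fun n hn =>
      (finite_setOf_isPeriodicPt hn.1).prod (Set.finite_singleton n)).subset ?_
    rintro ⟨x, n⟩ hx
    exact Set.mem_biUnion (x := n) ⟨hx.1, hx.le_pow⟩ ⟨hx.2.1, rfl⟩
  refine (hfin.image fun p => (p.2 : ℝ)⁻¹ • ∑ i ∈ range p.2, Φ (shift^[i] p.1)).subset ?_
  rintro _ ⟨x, n, hx, rfl⟩
  exact ⟨(x, n), hx, rfl⟩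

end SFT

theorem stmt14_general (d k m : ℕ) (hk : 0 < k) (M : Fin d → Fin d → Bool)
    (Φ : SFT d M → EuclideanSpace ℝ (Fin m))
    (hΦ : ∀ x y : SFT d M, (∀ i < k, x.1 i = y.1 i) → Φ x = Φ y) :
    {w : EuclideanSpace ℝ (Fin m) | ∃ (x : SFT d M) (n : ℕ), KElem k x n ∧
        w = (n : ℝ)⁻¹ • ∑ i ∈ Finset.range n, Φ (SFT.shift^[i] x)}.Finite ∧
    Rot Φ = convexHull ℝ
      {w : EuclideanSpace ℝ (Fin m) | ∃ (x : SFT d M) (n : ℕ), KElem k x n ∧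
        w = (n : ℝ)⁻¹ • ∑ i ∈ Finset.range n, Φ (SFT.shift^[i] x)} := by
  obtain ⟨G, rfl⟩ := SFT.exists_eq_comp_window hΦ
  refine ⟨SFT.finite_kElem_averages k fun x => G (SFT.window k x),
    (SFT.Rot_subset_convexHull G hk).antisymm (convexHull_min ?_ (SFT.convex_Rot_comp_window G))⟩
  rintro _ ⟨x, n, hx, rfl⟩
  exact SFT.average_mem_Rot G hx.1 hx.2.1

/-- For a transitive subshift of finite type and a potential constant on cylinders of
length `k`, the rotation set is a polyhedron: it is the convex hull of the (finite) set of
rotation vectors of the periodic point measures of `k`-elementary periodic points. -/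
theorem stmt14 (d k m : ℕ) (hk : 0 < k) (M : Fin d → Fin d → Bool)
    (htrans : ∀ U V : Set (SFT d M), IsOpen U → IsOpen V → U.Nonempty → V.Nonempty →
      ∃ n : ℕ, ((SFT.shift)^[n] '' U ∩ V).Nonempty)
    (Φ : SFT d M → EuclideanSpace ℝ (Fin m))
    (hΦ : ∀ x y : SFT d M, (∀ i < k, x.1 i = y.1 i) → Φ x = Φ y) :
    {w : EuclideanSpace ℝ (Fin m) | ∃ (x : SFT d M) (n : ℕ), KElem k x n ∧
        w = (n : ℝ)⁻¹ • ∑ i ∈ Finset.range n, Φ (SFT.shift^[i] x)}.Finite ∧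
    Rot Φ = convexHull ℝ
      {w : EuclideanSpace ℝ (Fin m) | ∃ (x : SFT d M) (n : ℕ), KElem k x n ∧
        w = (n : ℝ)⁻¹ • ∑ i ∈ Finset.range n, Φ (SFT.shift^[i] x)} :=
  stmt14_general d k m hk M Φ hΦ
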